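/- The generating set {f_{0,1,0}, f_{0,2,0}, f_{1,2,0}} is minimal: there do not exist symmetric polynomials s, t ∈ K[x_1,x_2,x_3] such that f_{0,1,0} = L(s)·f_{0,2,0} + L(t)·f_{1,2,0}; there do not exist symmetric s, t with f_{0,2,0} = L(s)·f_{0,1,0} + L(t)·f_{1,2,0}; and there do not exist symmetric s, t with f_{1,2,0} = L(s)·f_{0,1,0} + L(t)·f_{0,2,0}. -/

import Mathlib

/-- The Grassmann relation on the free algebra on three generators. -/
def GrassRel3 (K : Type*) [Field K] (x y : FreeAlgebra K (Fin 3)) : Prop :=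
  ∃ a b c : FreeAlgebra K (Fin 3), x = (a * b - b * a) * c - c * (a * b - b * a) ∧ y = 0

/-- The relatively free algebra of rank 3 in the variety generated by Grassmann algebras. -/
abbrev F3 (K : Type*) [Field K] := RingQuot (GrassRel3 K)

/-- The generators of `F3`. -/
noncomputable def X3 (K : Type*) [Field K] (i : Fin 3) : F3 K :=
  RingQuot.mkAlgHom K (GrassRel3 K) (FreeAlgebra.ι K i)

/-- The `K`-linear substitution map `K[x₁,x₂,x₃] → F3` sending each monomial
`x₁^a x₂^b x₃^c` to the ordered product `x₁^a x₂^b x₃^c` in `F3`. -/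
noncomputable def L3 (K : Type*) [Field K] (p : MvPolynomial (Fin 3) K) : F3 K :=
  p.support.sum fun m =>
    p.coeff m • (X3 K 0 ^ m 0 * X3 K 1 ^ m 1 * X3 K 2 ^ m 2)

/-- The elements `f_{a,b,c}` of `F3`. -/
noncomputable def fgen (K : Type*) [Field K] (a b c : ℕ) : F3 K :=
  (X3 K 0 ^ a * X3 K 1 ^ b - X3 K 0 ^ b * X3 K 1 ^ a) * X3 K 2 ^ c *
      (X3 K 1 * X3 K 0 - X3 K 0 * X3 K 1)
    + (X3 K 0 ^ a * X3 K 2 ^ b - X3 K 0 ^ b * X3 K 2 ^ a) * X3 K 1 ^ c *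
      (X3 K 2 * X3 K 0 - X3 K 0 * X3 K 2)
    + (X3 K 1 ^ a * X3 K 2 ^ b - X3 K 1 ^ b * X3 K 2 ^ a) * X3 K 0 ^ c *
      (X3 K 2 * X3 K 1 - X3 K 1 * X3 K 2)


/-!
Send `x_i` to the matrix `α_i + β_i E₀₁ + γ_i E₁₂`. These matrices generate an algebra of upper
triangular matrices with constant diagonal, in which every commutator is a multiple of `E₀₂` and
`M E₀₂ = M₀₀ E₀₂`; so the Grassmann identity holds and the map factors through `F_3`. Under it
`L(p)` acts on `E₀₂` by `p(α)`, and for `β, γ` the indicator vectors of `j` and `i` (with `i < j`)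
`f_{a,b,0}` goes to `(α_i^a α_j^b - α_i^b α_j^a) E₀₂`. A relation `f = L(s) f' + L(t) f''` thus
gives, for every `α` and every pair `i < j`, a scalar relation with the same two coefficients
`s(α)`, `t(α)`; at `α = (0, 1, 2)` the three pairs give linear equations that force `2 = 0`.
-/

open Matrix

section ScalarUpperTriangular

variable (R : Type*) [CommRing R]

def scalarUpperTriangular : Subalgebra R (Matrix (Fin 3) (Fin 3) R) where
  carrier := {M | M 1 0 = 0 ∧ M 2 0 = 0 ∧ M 2 1 = 0 ∧ M 1 1 = M 0 0 ∧ M 2 2 = M 0 0}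
  mul_mem' := by
    rintro M N ⟨_, _, _, _, _⟩ ⟨_, _, _, _, _⟩
    refine ⟨?_, ?_, ?_, ?_, ?_⟩ <;> simp [mul_apply, Fin.sum_univ_three, *]
  add_mem' := by
    rintro M N ⟨_, _, _, _, _⟩ ⟨_, _, _, _, _⟩
    refine ⟨?_, ?_, ?_, ?_, ?_⟩ <;> simp [*]
  algebraMap_mem' r := by
    refine ⟨?_, ?_, ?_, ?_, ?_⟩ <;> simp [algebraMap_eq_diagonal]

variable {R}

theorem mul_apply_zero_zero_of_mem {M N : Matrix (Fin 3) (Fin 3) R}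
    (hN : N ∈ scalarUpperTriangular R) : (M * N) 0 0 = M 0 0 * N 0 0 := by
  obtain ⟨h10, h20, -, -, -⟩ := hN
  simp [mul_apply, Fin.sum_univ_three, h10, h20]

theorem pow_apply_zero_zero_of_mem {M : Matrix (Fin 3) (Fin 3) R}
    (hM : M ∈ scalarUpperTriangular R) (n : ℕ) : (M ^ n) 0 0 = M 0 0 ^ n := by
  induction n with
  | zero => simp
  | succ n ih => rw [pow_succ, pow_succ, mul_apply_zero_zero_of_mem hM, ih]

theorem commutator_eq_smul_single_of_mem {M N : Matrix (Fin 3) (Fin 3) R}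
    (hM : M ∈ scalarUpperTriangular R) (hN : N ∈ scalarUpperTriangular R) :
    M * N - N * M = (M 0 1 * N 1 2 - N 0 1 * M 1 2) • single 0 2 1 := by
  obtain ⟨_, _, _, _, _⟩ := hM
  obtain ⟨_, _, _, _, _⟩ := hN
  ext i j
  fin_cases i <;> fin_cases j <;> simp [mul_apply, Fin.sum_univ_three, single, *] <;> ring

theorem mul_single_zero_two_of_mem {M : Matrix (Fin 3) (Fin 3) R}
    (hM : M ∈ scalarUpperTriangular R) : M * single 0 2 1 = M 0 0 • single 0 2 1 := by
  obtain ⟨_, _, _, _, _⟩ := hM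
  ext i j
  fin_cases i <;> fin_cases j <;> simp [mul_apply, single, *]

theorem single_zero_two_mul_of_mem {M : Matrix (Fin 3) (Fin 3) R}
    (hM : M ∈ scalarUpperTriangular R) : single 0 2 1 * M = M 0 0 • single 0 2 1 := by
  obtain ⟨_, _, _, _, _⟩ := hM
  ext i j
  fin_cases i <;> fin_cases j <;> simp [mul_apply, single, *]

end ScalarUpperTriangular

section Representation

variable {K : Type*} [Field K]

noncomputable def genMatrix (α β γ : Fin 3 → K) (i : Fin 3) : Matrix (Fin 3) (Fin 3) K :=
  α i • 1 + β i • single 0 1 1 + γ i • single 1 2 1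

theorem genMatrix_mem (α β γ : Fin 3 → K) (i : Fin 3) :
    genMatrix α β γ i ∈ scalarUpperTriangular K := by
  refine ⟨?_, ?_, ?_, ?_, ?_⟩ <;> simp [genMatrix, one_apply, single]

@[simp]
theorem genMatrix_apply_zero_zero (α β γ : Fin 3 → K) (i : Fin 3) :
    genMatrix α β γ i 0 0 = α i := by
  simp [genMatrix, single]

@[simp]
theorem genMatrix_apply_zero_one (α β γ : Fin 3 → K) (i : Fin 3) :
    genMatrix α β γ i 0 1 = β i := by
  simp [genMatrix, single]

@[simp]
theorem genMatrix_apply_one_two (α β γ : Fin 3 → K) (i : Fin 3) :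
    genMatrix α β γ i 1 2 = γ i := by
  simp [genMatrix, single]

theorem genMatrix_pow_mul_pow_apply_zero_zero (α β γ : Fin 3 → K) (i j : Fin 3) (a b : ℕ) :
    (genMatrix α β γ i ^ a * genMatrix α β γ j ^ b) 0 0 = α i ^ a * α j ^ b := by
  rw [mul_apply_zero_zero_of_mem (pow_mem (genMatrix_mem α β γ j) b),
    pow_apply_zero_zero_of_mem (genMatrix_mem α β γ i),
    pow_apply_zero_zero_of_mem (genMatrix_mem α β γ j), genMatrix_apply_zero_zero,
    genMatrix_apply_zero_zero]

theorem lift_genMatrix_mem (α β γ : Fin 3 → K) (x : FreeAlgebra K (Fin 3)) :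
    FreeAlgebra.lift K (genMatrix α β γ) x ∈ scalarUpperTriangular K := by
  induction x using FreeAlgebra.induction with
  | grade0 r => rw [AlgHom.commutes]; exact Subalgebra.algebraMap_mem _ r
  | grade1 i => rw [FreeAlgebra.lift_ι_apply]; exact genMatrix_mem α β γ i
  | mul a b ha hb => rw [map_mul]; exact mul_mem ha hb
  | add a b ha hb => rw [map_add]; exact add_mem ha hb

theorem lift_genMatrix_grassRel3 (α β γ : Fin 3 → K) ⦃x y : FreeAlgebra K (Fin 3)⦄
    (h : GrassRel3 K x y) :
    FreeAlgebra.lift K (genMatrix α β γ) x = FreeAlgebra.lift K (genMatrix α β γ) y := by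
  obtain ⟨a, b, c, rfl, rfl⟩ := h
  have hc := lift_genMatrix_mem α β γ c
  simp only [map_sub, map_mul, map_zero]
  rw [commutator_eq_smul_single_of_mem (lift_genMatrix_mem α β γ a) (lift_genMatrix_mem α β γ b),
    Matrix.smul_mul, Matrix.mul_smul, single_zero_two_mul_of_mem hc, mul_single_zero_two_of_mem hc,
    sub_self]

noncomputable def grassmannRep (α β γ : Fin 3 → K) : F3 K →ₐ[K] Matrix (Fin 3) (Fin 3) K :=
  RingQuot.liftAlgHom K ⟨FreeAlgebra.lift K (genMatrix α β γ), lift_genMatrix_grassRel3 α β γ⟩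

@[simp]
theorem grassmannRep_X3 (α β γ : Fin 3 → K) (i : Fin 3) :
    grassmannRep α β γ (X3 K i) = genMatrix α β γ i := by
  rw [X3, grassmannRep, RingQuot.liftAlgHom_mkAlgHom_apply, FreeAlgebra.lift_ι_apply]

theorem grassmannRep_mem (α β γ : Fin 3 → K) (z : F3 K) :
    grassmannRep α β γ z ∈ scalarUpperTriangular K := by
  obtain ⟨x, rfl⟩ := RingQuot.mkAlgHom_surjective K (GrassRel3 K) z
  rw [grassmannRep, RingQuot.liftAlgHom_mkAlgHom_apply]
  exact lift_genMatrix_mem α β γ x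

theorem grassmannRep_L3_apply_zero_zero (α β γ : Fin 3 → K) (p : MvPolynomial (Fin 3) K) :
    grassmannRep α β γ (L3 K p) 0 0 = MvPolynomial.eval α p := by
  rw [L3, map_sum, Matrix.sum_apply, MvPolynomial.eval_eq]
  refine Finset.sum_congr rfl fun m _ => ?_
  rw [Finset.prod_subset (Finset.subset_univ _) fun i _ hi => by
      rw [Finsupp.notMem_support_iff.mp hi, pow_zero], Fin.prod_univ_three]
  simp only [map_smul, map_mul, map_pow, grassmannRep_X3, Matrix.smul_apply, smul_eq_mul,
    mul_apply_zero_zero_of_mem (pow_mem (genMatrix_mem α β γ 2) _),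
    genMatrix_pow_mul_pow_apply_zero_zero, pow_apply_zero_zero_of_mem (genMatrix_mem α β γ 2),
    genMatrix_apply_zero_zero]

def altMonomial (a b : ℕ) (u v : K) : K :=
  u ^ a * v ^ b - u ^ b * v ^ a

def fgenWeight (α β γ : Fin 3 → K) (a b : ℕ) : K :=
  altMonomial a b (α 0) (α 1) * (β 1 * γ 0 - β 0 * γ 1)
    + altMonomial a b (α 0) (α 2) * (β 2 * γ 0 - β 0 * γ 2)
    + altMonomial a b (α 1) (α 2) * (β 2 * γ 1 - β 1 * γ 2)

theorem grassmannRep_fgen (α β γ : Fin 3 → K) (a b : ℕ) :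
    grassmannRep α β γ (fgen K a b 0) = fgenWeight α β γ a b • single 0 2 1 := by
  have hX := genMatrix_mem α β γ
  have hcoeff (i j : Fin 3) := sub_mem (mul_mem (pow_mem (hX i) a) (pow_mem (hX j) b))
    (mul_mem (pow_mem (hX i) b) (pow_mem (hX j) a))
  simp only [fgen, pow_zero, mul_one, map_add, map_sub, map_mul, map_pow, grassmannRep_X3]
  rw [commutator_eq_smul_single_of_mem (hX 1) (hX 0),
    commutator_eq_smul_single_of_mem (hX 2) (hX 0), commutator_eq_smul_single_of_mem (hX 2) (hX 1),
    Matrix.mul_smul, Matrix.mul_smul, Matrix.mul_smul, mul_single_zero_two_of_mem (hcoeff 0 1),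
    mul_single_zero_two_of_mem (hcoeff 0 2), mul_single_zero_two_of_mem (hcoeff 1 2),
    smul_smul, smul_smul, smul_smul, ← add_smul, ← add_smul]
  simp only [Matrix.sub_apply, genMatrix_pow_mul_pow_apply_zero_zero, genMatrix_apply_zero_one,
    genMatrix_apply_one_two, fgenWeight, altMonomial]
  ring_nf

theorem fgenWeight_eq_of_fgen_eq (α β γ : Fin 3 → K) {s t : MvPolynomial (Fin 3) K}
    {a b a' b' a'' b'' : ℕ}
    (h : fgen K a b 0 = L3 K s * fgen K a' b' 0 + L3 K t * fgen K a'' b'' 0) :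
    fgenWeight α β γ a b = MvPolynomial.eval α s * fgenWeight α β γ a' b'
      + MvPolynomial.eval α t * fgenWeight α β γ a'' b'' := by
  have h02 := congrArg (grassmannRep α β γ · 0 2) h
  simpa [grassmannRep_fgen, Matrix.mul_smul, mul_single_zero_two_of_mem (grassmannRep_mem α β γ _),
    grassmannRep_L3_apply_zero_zero, smul_smul, mul_comm] using h02

theorem fgenWeight_single (α : Fin 3 → K) {i j : Fin 3} (hij : i < j) (a b : ℕ) :
    fgenWeight α (Pi.single j 1) (Pi.single i 1) a b = altMonomial a b (α i) (α j) := by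
  fin_cases i <;> fin_cases j <;> simp_all [fgenWeight]

theorem altMonomial_eq_of_fgen_eq (α : Fin 3 → K) {i j : Fin 3} (hij : i < j)
    {s t : MvPolynomial (Fin 3) K} {a b a' b' a'' b'' : ℕ}
    (h : fgen K a b 0 = L3 K s * fgen K a' b' 0 + L3 K t * fgen K a'' b'' 0) :
    altMonomial a b (α i) (α j) = MvPolynomial.eval α s * altMonomial a' b' (α i) (α j)
      + MvPolynomial.eval α t * altMonomial a'' b'' (α i) (α j) := by
  simpa only [fgenWeight_single α hij] using
    fgenWeight_eq_of_fgen_eq α (Pi.single j 1) (Pi.single i 1) h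

end Representation

/-- The generating set `{f_{0,1,0}, f_{0,2,0}, f_{1,2,0}}` is minimal: none of the three
elements lies in the module generated by the other two over the symmetric polynomials. -/
theorem symm_commIdeal3_minimal_generators (K : Type*) [Field K] [CharZero K] :
    (¬ ∃ s t : MvPolynomial (Fin 3) K, s.IsSymmetric ∧ t.IsSymmetric ∧
        fgen K 0 1 0 = L3 K s * fgen K 0 2 0 + L3 K t * fgen K 1 2 0) ∧
      (¬ ∃ s t : MvPolynomial (Fin 3) K, s.IsSymmetric ∧ t.IsSymmetric ∧
        fgen K 0 2 0 = L3 K s * fgen K 0 1 0 + L3 K t * fgen K 1 2 0) ∧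
      (¬ ∃ s t : MvPolynomial (Fin 3) K, s.IsSymmetric ∧ t.IsSymmetric ∧
        fgen K 1 2 0 = L3 K s * fgen K 0 1 0 + L3 K t * fgen K 0 2 0) := by
  -- At `x = (0, 1, 2)` the values of `u^a v^b - u^b v^a` at the pairs `(0,1), (0,2), (1,2)` are
  -- `1, 2, 1` for `(a,b) = (0,1)`, `1, 4, 3` for `(0,2)` and `0, 0, 2` for `(1,2)`.
  refine ⟨?_, ?_, ?_⟩ <;> rintro ⟨s, t, -, -, h⟩ <;>
    have h01 := altMonomial_eq_of_fgen_eq ![(0 : K), 1, 2] (show (0 : Fin 3) < 1 by decide) h <;>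
    have h02 := altMonomial_eq_of_fgen_eq ![(0 : K), 1, 2] (show (0 : Fin 3) < 2 by decide) h <;>
    have h12 := altMonomial_eq_of_fgen_eq ![(0 : K), 1, 2] (show (1 : Fin 3) < 2 by decide) h <;>
    norm_num [altMonomial, Matrix.cons_val_two, Matrix.tail_cons, Matrix.head_cons] at h01 h02 h12
  · exact two_ne_zero (by linear_combination 4 * h01 - h02 : (2 : K) = 0)
  · exact two_ne_zero (by linear_combination h02 - 2 * h01 : (2 : K) = 0)
  · exact two_ne_zero (by linear_combination h01 - h02 + h12 : (2 : K) = 0)
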